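/- arXiv:1505.00768 — 2 statements merged into one kernel-verified Lean document; each statement's English description precedes it below -/
import Mathlib

section
/- Let N ≥ 1, let D = diag(δ₁,…,δ_N) with δᵢ > 0, and let B = (β_{ij}) be a nonnegative irreducible matrix. If every complex eigenvalue of B − D has real part at most 0, then every differentiable p : [0,∞) → ℝ^N with p(0) ∈ [0,1]^N satisfying pᵢ'(t) = −δᵢ pᵢ(t) + Σ_{j=1}^N β_{ij} p_j(t)(1 − pᵢ(t)) for all i and all t ≥ 0 converges to 0 as t → ∞. -/
/-- A nonnegative matrix is irreducible if, for every nonempty proper subset `S` of the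
index set, there is an edge leaving `S` (equivalently, the underlying directed graph is
strongly connected). -/
def MatrixIrreducible {N : ℕ} (B : Matrix (Fin N) (Fin N) ℝ) : Prop :=
  ∀ S : Finset (Fin N), S.Nonempty → S ≠ Finset.univ →
    ∃ i ∈ S, ∃ j, j ∉ S ∧ B i j ≠ 0

/-!
Adding a multiple of the identity to `B - D` gives a nonnegative matrix `M` with positive
diagonal; irreducibility makes `M ^ (N - 1)` send every nonzero nonnegative vector to a positive
one. Maximising the Collatz–Wielandt function `x ↦ minᵢ ((B - D) x)ᵢ / xᵢ` over the image of the
simplex under this power gives a positive eigenvector `u` of `B - D`; its eigenvalue is real, hence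
`≤ 0` by hypothesis, so `B u ≤ D u`.

The cube `[0,1]^N` is invariant, since a solution cannot first touch the barriers `-η e^{Λ t}`
or `1 + η e^{Λ t}`. Inside the cube, `B u ≤ D u` gives `pᵢ' ≤ -δᵢ (uᵢ y)²` at a first contact
`pᵢ = uᵢ y` with all `pⱼ ≤ uⱼ y`, so for `u ≥ 1`, `c ≤ minᵢ δᵢ uᵢ` and `y = 2 / (1 + c t)`, which
solves `y' = -(c / 2) y²`, the solution stays below `u y → 0`.
-/

open Matrix

namespace MatrixIrreducible

variable {N : ℕ} {A B : Matrix (Fin N) (Fin N) ℝ}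

theorem transpose (h : MatrixIrreducible B) : MatrixIrreducible Bᵀ := by
  intro S hS hSu
  obtain ⟨i, hi, j, hj, hij⟩ :=
    h Sᶜ ((Finset.compl_ne_univ_iff_nonempty Sᶜ).mp (by rwa [compl_compl]))
      ((Finset.compl_ne_univ_iff_nonempty S).mpr hS)
  exact ⟨j, by simpa using hj, i, by simpa using hi, hij⟩

theorem of_offDiag_eq (h : MatrixIrreducible B) (hAB : ∀ i j, i ≠ j → A i j = B i j) :
    MatrixIrreducible A := by
  intro S hS hSu
  obtain ⟨i, hi, j, hj, hij⟩ := h S hS hSu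
  exact ⟨i, hi, j, hj, by rwa [hAB i j (ne_of_mem_of_not_mem hi hj)]⟩

end MatrixIrreducible

namespace Matrix

open Finset

section Nonneg

variable {ι : Type*} [Fintype ι] {M : Matrix ι ι ℝ}

theorem mulVec_mono (hM : ∀ i j, 0 ≤ M i j) {x y : ι → ℝ} (hxy : x ≤ y) : M *ᵥ x ≤ M *ᵥ y :=
  fun i => Finset.sum_le_sum fun j _ => mul_le_mul_of_nonneg_left (hxy j) (hM i j)

theorem mul_le_mulVec_apply (hM : ∀ i j, 0 ≤ M i j) {v : ι → ℝ} (hv : 0 ≤ v) (i j : ι) :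
    M i j * v j ≤ (M *ᵥ v) i :=
  Finset.single_le_sum (f := fun k => M i k * v k) (fun k _ => mul_nonneg (hM i k) (hv k))
    (mem_univ j)

theorem mulVec_const_apply (c : ℝ) (i : ι) : (M *ᵥ fun _ => c) i = (∑ j, M i j) * c := by
  simp [mulVec, dotProduct, Finset.sum_mul]

end Nonneg

theorem exists_pos_eigenvector_of_commute {ι : Type*} [Fintype ι] [Nonempty ι]
    {A P : Matrix ι ι ℝ} (hAP : Commute A P)
    (hP : ∀ v : ι → ℝ, 0 ≤ v → v ≠ 0 → ∀ i, 0 < (P *ᵥ v) i) :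
    ∃ (r : ℝ) (u : ι → ℝ), (∀ i, 0 < u i) ∧ A *ᵥ u = r • u := by
  have hPpos : ∀ x ∈ stdSimplex ℝ ι, ∀ i, 0 < (P *ᵥ x) i := by
    rintro x ⟨hx0, hx1⟩
    refine hP x hx0 ?_
    rintro rfl
    simp at hx1
  let cw : (ι → ℝ) → ℝ := fun x =>
    univ.inf' univ_nonempty fun i => (A *ᵥ (P *ᵥ x)) i / (P *ᵥ x) i
  have hcw : ContinuousOn cw (stdSimplex ℝ ι) :=
    ContinuousOn.finset_inf'_apply _ fun i _ =>
      ContinuousOn.div (by fun_prop) (by fun_prop) fun x hx => (hPpos x hx i).ne'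
  obtain ⟨x, hx, hmax⟩ := (isCompact_stdSimplex ℝ ι).exists_isMaxOn
    ⟨_, by classical exact single_mem_stdSimplex ℝ (Classical.arbitrary ι)⟩ hcw
  set u := P *ᵥ x
  set r := cw x
  have hu := hPpos x hx
  have hru : r • u ≤ A *ᵥ u := fun i => by
    have : r ≤ (A *ᵥ u) i / u i := Finset.inf'_le _ (mem_univ i)
    rwa [le_div_iff₀ (hu i)] at this
  refine ⟨r, u, hu, ?_⟩
  by_contra hne
  have hz := hP _ (sub_nonneg.mpr hru) (sub_ne_zero.mpr hne)
  have hsum : 0 < ∑ i, u i := Finset.sum_pos (fun i _ => hu i) univ_nonempty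
  set s := (∑ i, u i)⁻¹
  have hs : 0 < s := inv_pos.mpr hsum
  have hy : s • u ∈ stdSimplex ℝ ι :=
    ⟨fun i => (smul_pos hs (hu i)).le, by simp [s, ← Finset.mul_sum, inv_mul_cancel₀ hsum.ne']⟩
  suffices r < cw (s • u) from (hmax hy).not_gt this
  refine (Finset.lt_inf'_iff _).2 fun i _ => ?_
  have hAPu : A *ᵥ (P *ᵥ u) = r • (P *ᵥ u) + P *ᵥ (A *ᵥ u - r • u) := by
    rw [mulVec_mulVec, hAP.eq, ← mulVec_mulVec, mulVec_sub, mulVec_smul]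
    abel
  have hPu : 0 < (P *ᵥ u) i := hP u (fun j => (hu j).le) (fun h => (hu i).ne' (congrFun h i)) i
  rw [mulVec_smul, mulVec_smul, hAPu]
  simp only [Pi.smul_apply, Pi.add_apply, smul_eq_mul]
  rw [mul_div_mul_left _ _ hs.ne', lt_div_iff₀ hPu]
  linarith [hz i]

theorem ofReal_mem_spectrum_map {ι : Type*} [Fintype ι] [DecidableEq ι] {A : Matrix ι ι ℝ}
    {r : ℝ} {u : ι → ℝ} (hu : u ≠ 0) (hAu : A *ᵥ u = r • u) :
    (r : ℂ) ∈ spectrum ℂ (A.map (fun x => (x : ℂ))) := by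
  rw [← spectrum_toLin']
  refine Module.End.HasEigenvalue.mem_spectrum <|
    Module.End.hasEigenvalue_of_hasEigenvector (x := fun i => (u i : ℂ)) ⟨?_, ?_⟩
  · rw [Module.End.mem_eigenspace_iff, toLin'_apply]
    ext i
    change (A.map Complex.ofRealHom *ᵥ Complex.ofRealHom ∘ u) i = _
    simp [← RingHom.map_mulVec, hAu]
  · exact fun h => hu (funext fun i => by simpa using congrFun h i)

end Matrix

section PosSupport

open Finset

variable {N : ℕ} {M : Matrix (Fin N) (Fin N) ℝ}

noncomputable def posSupport (v : Fin N → ℝ) : Finset (Fin N) := univ.filter fun i => 0 < v i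

theorem mem_posSupport {v : Fin N → ℝ} {i : Fin N} : i ∈ posSupport v ↔ 0 < v i := by
  simp [posSupport]

theorem card_posSupport_mulVec (hM : ∀ i j, 0 ≤ M i j) (hdiag : ∀ i, 0 < M i i)
    (hirr : MatrixIrreducible Mᵀ) {v : Fin N → ℝ} (hv : 0 ≤ v) (hne : (posSupport v).Nonempty) :
    min (#(posSupport v) + 1) N ≤ #(posSupport (M *ᵥ v)) := by
  have hsub : posSupport v ⊆ posSupport (M *ᵥ v) := fun i hi => mem_posSupport.2 <|
    (mul_pos (hdiag i) (mem_posSupport.1 hi)).trans_le (mul_le_mulVec_apply hM hv i i)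
  by_cases hfull : posSupport v = univ
  · have := card_le_card hsub
    rw [hfull, card_univ, Fintype.card_fin] at this
    omega
  · obtain ⟨j, hj, i, hi, hij⟩ := hirr _ hne hfull
    have hiM : i ∈ posSupport (M *ᵥ v) := mem_posSupport.2 <|
      (mul_pos ((hM i j).lt_of_ne' hij) (mem_posSupport.1 hj)).trans_le
        (mul_le_mulVec_apply hM hv i j)
    have := card_lt_card ((ssubset_iff_of_subset hsub).2 ⟨i, hiM, hi⟩)
    omega

theorem card_posSupport_pow_mulVec (hM : ∀ i j, 0 ≤ M i j) (hdiag : ∀ i, 0 < M i i)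
    (hirr : MatrixIrreducible Mᵀ) (k : ℕ) {v : Fin N → ℝ} (hv : 0 ≤ v)
    (hne : (posSupport v).Nonempty) :
    min (#(posSupport v) + k) N ≤ #(posSupport (M ^ k *ᵥ v)) := by
  induction k generalizing v with
  | zero => simp
  | succ k ih =>
    have hMv := card_posSupport_mulVec hM hdiag hirr hv hne
    have hcard := hne.card_pos
    have hN : #(posSupport v) ≤ N := by simpa using card_le_univ (posSupport v)
    rw [pow_succ, ← mulVec_mulVec]
    have := ih (v := M *ᵥ v) (by simpa using mulVec_mono hM hv) (card_pos.1 (by omega))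
    omega

theorem pow_sub_one_mulVec_pos (hM : ∀ i j, 0 ≤ M i j) (hdiag : ∀ i, 0 < M i i)
    (hirr : MatrixIrreducible Mᵀ) {v : Fin N → ℝ} (hv : 0 ≤ v) (hne : v ≠ 0) (i : Fin N) :
    0 < (M ^ (N - 1) *ᵥ v) i := by
  obtain ⟨j, hj⟩ := Function.ne_iff.1 hne
  have hS : (posSupport v).Nonempty := ⟨j, mem_posSupport.2 ((hv j).lt_of_ne' hj)⟩
  have hgrow := card_posSupport_pow_mulVec hM hdiag hirr (N - 1) hv hS
  have hpos := hS.card_pos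
  have hle : #(posSupport (M ^ (N - 1) *ᵥ v)) ≤ N := by
    simpa using card_le_univ (posSupport (M ^ (N - 1) *ᵥ v))
  have hfull : posSupport (M ^ (N - 1) *ᵥ v) = univ :=
    eq_univ_of_card _ (by rw [Fintype.card_fin]; omega)
  exact mem_posSupport.1 (hfull ▸ mem_univ i)

end PosSupport

theorem MatrixIrreducible.exists_pos_eigenvector {N : ℕ} [NeZero N] {A : Matrix (Fin N) (Fin N) ℝ}
    (hirr : MatrixIrreducible A) (hA : ∀ i j, i ≠ j → 0 ≤ A i j) :
    ∃ (r : ℝ) (u : Fin N → ℝ), (∀ i, 0 < u i) ∧ A *ᵥ u = r • u := by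
  obtain ⟨c, hc⟩ := Finite.exists_le fun i => -A i i
  set M := A + (c + 1) • (1 : Matrix (Fin N) (Fin N) ℝ)
  have hMapp : ∀ i j, M i j = A i j + if i = j then c + 1 else 0 := by
    intro i j
    by_cases h : i = j <;> simp [M, h]
  have hdiag : ∀ i, 0 < M i i := fun i => by
    rw [hMapp, if_pos rfl]
    linarith [hc i]
  have hM : ∀ i j, 0 ≤ M i j := fun i j => by
    by_cases h : i = j
    · exact h ▸ (hdiag i).le
    · rw [hMapp, if_neg h, add_zero]
      exact hA i j h
  have hirrM : MatrixIrreducible Mᵀ := hirr.transpose.of_offDiag_eq fun i j hij => by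
    simp [hMapp, Ne.symm hij]
  exact Matrix.exists_pos_eigenvector_of_commute
    (((Commute.refl A).add_right ((Commute.one_right A).smul_right _)).pow_right _)
    fun v hv hne => pow_sub_one_mulVec_pos hM hdiag hirrM hv hne

open Set Filter Topology

theorem HasDerivAt.nonneg_of_isMaxOn_Icc {f : ℝ → ℝ} {f' a b : ℝ} (hf : HasDerivAt f f' b)
    (hab : a < b) (hmax : IsMaxOn f (Icc a b) b) : 0 ≤ f' := by
  have hcone : a - b ∈ posTangentConeAt (Icc a b) b :=
    sub_mem_posTangentConeAt_of_segment_subset (by rw [segment_symm, segment_eq_Icc hab.le])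
  have := hmax.localize.hasFDerivWithinAt_nonpos hf.hasDerivWithinAt.hasFDerivWithinAt hcone
  simp only [ContinuousLinearMap.toSpanSingleton_apply, smul_eq_mul] at this
  exact nonneg_of_mul_nonpos_right this (sub_neg.2 hab)

theorem forall_lt_zero_of_first_crossing {ι : Type*} [Finite ι] {g g' : ι → ℝ → ℝ} {a b : ℝ}
    (hg : ∀ i, ∀ t ∈ Icc a b, HasDerivAt (g i) (g' i t) t) (ha : ∀ i, g i a < 0)
    (hcross : ∀ t ∈ Ioc a b, (∀ j, g j t ≤ 0) → ∀ i, g i t = 0 → g' i t < 0) :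
    ∀ t ∈ Icc a b, ∀ i, g i t < 0 := by
  by_contra! hbad
  set S := ⋃ i, Icc a b ∩ g i ⁻¹' Ici 0
  have hSc : IsClosed S := isClosed_iUnion_of_finite fun i =>
    ContinuousOn.preimage_isClosed_of_isClosed
      (fun t ht => (hg i t ht).continuousAt.continuousWithinAt) isClosed_Icc isClosed_Ici
  have hSne : S.Nonempty := let ⟨t, ht, i, hi⟩ := hbad; ⟨t, mem_iUnion.2 ⟨i, ht, hi⟩⟩
  have hSbdd : BddBelow S := ⟨a, fun t ht => let ⟨_, hi⟩ := mem_iUnion.1 ht; hi.1.1⟩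
  obtain ⟨i, ⟨ha₀, hb₀⟩, hi⟩ := mem_iUnion.1 (hSc.csInf_mem hSne hSbdd)
  set t₀ := sInf S
  have hbefore : ∀ t ∈ Ico a t₀, ∀ j, g j t < 0 := fun t ht j => by
    by_contra! h
    exact notMem_of_lt_csInf ht.2 hSbdd (mem_iUnion.2 ⟨j, ⟨ht.1, ht.2.le.trans hb₀⟩, h⟩)
  have hat₀ : a < t₀ := ha₀.lt_of_ne fun h => (ha i).not_ge (h ▸ hi)
  have hle₀ : ∀ j, g j t₀ ≤ 0 := fun j =>
    ContinuousWithinAt.closure_le (s := Ico a t₀) (by simp [closure_Ico hat₀.ne, ha₀])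
      (hg j t₀ ⟨ha₀, hb₀⟩).continuousAt.continuousWithinAt continuousWithinAt_const
      fun t ht => (hbefore t ht j).le
  have hle : ∀ t ∈ Icc a t₀, ∀ j, g j t ≤ 0 := fun t ht j =>
    ht.2.lt_or_eq.elim (fun h => (hbefore t ⟨ht.1, h⟩ j).le) fun h => h ▸ hle₀ j
  have hzero : g i t₀ = 0 := le_antisymm (hle₀ i) hi
  refine (hcross t₀ ⟨hat₀, hb₀⟩ hle₀ i hzero).not_ge ?_
  exact (hg i t₀ ⟨ha₀, hb₀⟩).nonneg_of_isMaxOn_Icc hat₀ fun t ht => hzero ▸ hle t ht i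

section SIS

variable {ι : Type*} [Fintype ι] {δ : ι → ℝ} {B : Matrix ι ι ℝ} {p : ℝ → ι → ℝ}

def sisVectorField (δ : ι → ℝ) (B : Matrix ι ι ℝ) (x : ι → ℝ) (i : ι) : ℝ :=
  -(δ i) * x i + ∑ j, B i j * x j * (1 - x i)

theorem sisVectorField_eq (x : ι → ℝ) (i : ι) :
    sisVectorField δ B x i = -(δ i) * x i + (B *ᵥ x) i * (1 - x i) := by
  simp [sisVectorField, mulVec, dotProduct, Finset.sum_mul]

theorem sis_mem_Ioo_of_barrier (hδ : ∀ i, 0 ≤ δ i) (hB : ∀ i j, 0 ≤ B i j) {Λ T : ℝ} (hT : 0 ≤ T)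
    (hΛ : ∀ i, 2 * ∑ j, B i j < Λ) {h : ℝ → ℝ} (hh : ∀ t ∈ Icc 0 T, HasDerivAt h (Λ * h t) t)
    (hh01 : ∀ t ∈ Icc 0 T, h t ∈ Ioc 0 1)
    (hode : ∀ i, ∀ t, 0 ≤ t → HasDerivAt (fun s => p s i) (sisVectorField δ B (p t) i) t)
    (h0 : ∀ i, p 0 i ∈ Icc 0 1) :
    ∀ t ∈ Icc 0 T, ∀ i, p t i ∈ Ioo (-h t) (1 + h t) := by
  have key := forall_lt_zero_of_first_crossing (a := 0) (b := T)
    (g := Sum.elim (fun i t => -h t - p t i) (fun i t => p t i - 1 - h t))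
    (g' := Sum.elim (fun i t => -(Λ * h t) - sisVectorField δ B (p t) i)
      (fun i t => sisVectorField δ B (p t) i - Λ * h t)) ?_ ?_ ?_
  · intro t ht i
    have hl := key t ht (.inl i)
    have hu := key t ht (.inr i)
    simp only [Sum.elim_inl, Sum.elim_inr] at hl hu
    constructor <;> linarith
  · rintro (i | i) t ht
    · exact (hh t ht).neg.sub (hode i t ht.1)
    · exact ((hode i t ht.1).sub_const 1).sub (hh t ht)
  · obtain ⟨hpos, -⟩ := hh01 0 ⟨le_rfl, hT⟩
    rintro (i | i) <;> simp only [Sum.elim_inl, Sum.elim_inr] <;> linarith [(h0 i).1, (h0 i).2]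
  · rintro t ⟨ht0, htT⟩ hle (i | i) heq <;>
      simp only [Sum.elim_inl, Sum.elim_inr] at heq ⊢
    all_goals
      -- in both cases only the lower bounds `-h ≤ pⱼ` are needed, to bound `(B p)ᵢ` from below
      have hlow : (fun _ => -h t) ≤ p t := fun j => by
        have := hle (.inl j); simp only [Sum.elim_inl] at this; linarith
      have hBp := mulVec_mono hB hlow i
      rw [mulVec_const_apply] at hBp
      obtain ⟨hpos, hle1⟩ := hh01 t ⟨ht0.le, htT⟩
      have hrow : 0 ≤ ∑ j, B i j := Finset.sum_nonneg fun j _ => hB i j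
      have hΛh := mul_lt_mul_of_pos_right (hΛ i) hpos
      have hRh := mul_le_mul_of_nonneg_left hle1 (mul_nonneg hrow hpos.le)
      have hδh := mul_nonneg (hδ i) hpos.le
      rw [sisVectorField_eq]
    · have hpi : p t i = -h t := by linarith
      rw [hpi]
      linarith [mul_le_mul_of_nonneg_right hBp (by linarith : (0:ℝ) ≤ 1 + h t)]
    · have hpi : p t i = 1 + h t := by linarith
      rw [hpi]
      linarith [mul_le_mul_of_nonneg_left hBp hpos.le, mul_nonneg hrow hpos.le, hδ i]

theorem sis_mem_Icc (hδ : ∀ i, 0 ≤ δ i) (hB : ∀ i j, 0 ≤ B i j)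
    (hode : ∀ i, ∀ t, 0 ≤ t → HasDerivAt (fun s => p s i) (sisVectorField δ B (p t) i) t)
    (h0 : ∀ i, p 0 i ∈ Icc 0 1) {T : ℝ} (hT : 0 ≤ T) (i : ι) : p T i ∈ Icc 0 1 := by
  set Λ := 1 + 2 * ∑ k, ∑ j, B k j
  have hrow : ∀ k, ∑ j, B k j ≤ ∑ k, ∑ j, B k j := fun k =>
    Finset.single_le_sum (fun k _ => Finset.sum_nonneg fun j _ => hB k j) (Finset.mem_univ k)
  have hΛ : 0 ≤ Λ := by
    have : 0 ≤ ∑ k, ∑ j, B k j := Finset.sum_nonneg fun k _ => Finset.sum_nonneg fun j _ => hB k j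
    linarith
  have hnear : ∀ η ∈ Ioc (0 : ℝ) 1, -η < p T i ∧ p T i < 1 + η := by
    rintro η ⟨hη0, hη1⟩
    have hbar := sis_mem_Ioo_of_barrier (Λ := Λ) (h := fun t => η * Real.exp (Λ * (t - T))) hδ hB hT
      (fun k => by linarith [hrow k]) (fun t _ => ?_) (fun t ht => ⟨by positivity, ?_⟩) hode h0
      T ⟨hT, le_rfl⟩ i
    · simpa using hbar
    · exact ((((hasDerivAt_id t).sub_const T).const_mul Λ).exp.const_mul η).congr_deriv
        (by simp only [id]; ring)
    · calc η * Real.exp (Λ * (t - T)) ≤ η * 1 :=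
            mul_le_mul_of_nonneg_left (Real.exp_le_one_iff.2
              (mul_nonpos_of_nonneg_of_nonpos hΛ (by linarith [ht.2]))) hη0.le
        _ ≤ 1 := by linarith
  refine ⟨le_of_forall_pos_lt_add fun ε hε => ?_, le_of_forall_pos_lt_add fun ε hε => ?_⟩
  · linarith [(hnear (min ε 1) ⟨lt_min hε one_pos, min_le_right _ _⟩).1, min_le_left ε 1]
  · linarith [(hnear (min ε 1) ⟨lt_min hε one_pos, min_le_right _ _⟩).2, min_le_left ε 1]

theorem sis_tendsto_zero_of_one_le_supersolution [Nonempty ι] (hδ : ∀ i, 0 < δ i)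
    (hB : ∀ i j, 0 ≤ B i j) {u : ι → ℝ} (hu : ∀ i, 1 ≤ u i) (hBu : ∀ i, (B *ᵥ u) i ≤ δ i * u i)
    (hode : ∀ i, ∀ t, 0 ≤ t → HasDerivAt (fun s => p s i) (sisVectorField δ B (p t) i) t)
    (hp : ∀ t, 0 ≤ t → ∀ i, p t i ∈ Icc 0 1) : Tendsto p atTop (𝓝 0) := by
  obtain ⟨k, hk⟩ := Finite.exists_min fun i => δ i * u i
  set c := δ k * u k
  have hc : 0 < c := mul_pos (hδ k) (by linarith [hu k])
  set y : ℝ → ℝ := fun t => 2 / (1 + c * t)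
  have hypos : ∀ t, 0 ≤ t → 0 < y t := fun t ht => by positivity
  have hy : ∀ t, 0 ≤ t → HasDerivAt y (-(c / 2) * y t ^ 2) t := fun t ht => by
    have hden : 1 + c * t ≠ 0 := by positivity
    refine ((hasDerivAt_const t (2 : ℝ)).div (((hasDerivAt_id t).const_mul c).const_add 1)
      hden).congr_deriv ?_
    simp only [y, id]
    field_simp
    ring
  have hbelow : ∀ t, 0 ≤ t → ∀ i, p t i < u i * y t := by
    intro T hT i
    refine sub_neg.1 <| forall_lt_zero_of_first_crossing (a := 0) (b := T)
      (g := fun i t => p t i - u i * y t)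
      (g' := fun i t => sisVectorField δ B (p t) i - u i * (-(c / 2) * y t ^ 2))
      (fun i t ht => (hode i t ht.1).sub ((hy t ht.1).const_mul (u i))) (fun i => ?_) ?_
      T ⟨hT, le_rfl⟩ i
    · simp only [y, mul_zero, add_zero, div_one]
      linarith [(hp 0 le_rfl i).2, hu i]
    · intro t ht hle i heq
      have hpi : p t i = u i * y t := by linarith
      have hpy : p t ≤ y t • u := fun j => by
        have := hle j
        simp only [Pi.smul_apply, smul_eq_mul]
        linarith
      have hBp : (B *ᵥ p t) i ≤ y t * (δ i * u i) := by
        refine (mulVec_mono hB hpy i).trans ?_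
        rw [mulVec_smul, Pi.smul_apply, smul_eq_mul]
        exact mul_le_mul_of_nonneg_left (hBu i) (hypos t ht.1.le).le
      have hyt := hypos t ht.1.le
      have h1 : 0 ≤ 1 - u i * y t := by linarith [(hp t ht.1.le i).2]
      have hX : 0 < u i * y t ^ 2 := by have := hu i; positivity
      calc sisVectorField δ B (p t) i - u i * (-(c / 2) * y t ^ 2)
          = -(δ i) * (u i * y t) + (B *ᵥ p t) i * (1 - u i * y t) + c / 2 * (u i * y t ^ 2) := by
            rw [sisVectorField_eq, hpi]; ring
        _ ≤ -(δ i) * (u i * y t) + y t * (δ i * u i) * (1 - u i * y t)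
            + c / 2 * (u i * y t ^ 2) := by gcongr
        _ = -(δ i * u i) * (u i * y t ^ 2) + c / 2 * (u i * y t ^ 2) := by ring
        _ ≤ -c * (u i * y t ^ 2) + c / 2 * (u i * y t ^ 2) := by gcongr; exact hk i
        _ < 0 := by linarith [mul_pos hc hX]
  rw [tendsto_pi_nhds]
  intro i
  have hy0 : Tendsto (fun t => u i * y t) atTop (𝓝 0) := by
    simpa using ((tendsto_const_nhds.div_atTop
      (tendsto_atTop_add_const_left _ 1 (tendsto_id.const_mul_atTop hc))).const_mul (u i))
  exact tendsto_of_tendsto_of_tendsto_of_le_of_le' tendsto_const_nhds hy0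
    (eventually_ge_atTop 0 |>.mono fun t ht => (hp t ht i).1)
    (eventually_ge_atTop 0 |>.mono fun t ht => (hbelow t ht i).le)

theorem sis_tendsto_zero_of_supersolution [Nonempty ι] (hδ : ∀ i, 0 < δ i)
    (hB : ∀ i j, 0 ≤ B i j) {u : ι → ℝ} (hu : ∀ i, 0 < u i) (hBu : ∀ i, (B *ᵥ u) i ≤ δ i * u i)
    (hode : ∀ i, ∀ t, 0 ≤ t → HasDerivAt (fun s => p s i) (sisVectorField δ B (p t) i) t)
    (hp : ∀ t, 0 ≤ t → ∀ i, p t i ∈ Icc 0 1) : Tendsto p atTop (𝓝 0) := by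
  obtain ⟨k, hk⟩ := Finite.exists_min u
  refine sis_tendsto_zero_of_one_le_supersolution hδ hB (u := (u k)⁻¹ • u) (fun i => ?_)
    (fun i => ?_) hode hp
  · simpa using (one_le_inv_mul₀ (hu k)).2 (hk i)
  · rw [mulVec_smul]
    simpa [mul_left_comm] using mul_le_mul_of_nonneg_left (hBu i) (inv_nonneg.2 (hu k).le)

end SIS

/-- Heterogeneous SIS network model: if every complex eigenvalue of
`B − D` has real part at most `0`, then every solution of
`pᵢ' = −δᵢ pᵢ + Σⱼ β_{ij} pⱼ (1 − pᵢ)` starting in `[0,1]^N` converges to `0`. -/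
theorem stmt_8 (N : ℕ) (hN : 1 ≤ N)
    (δ : Fin N → ℝ) (hδ : ∀ i, 0 < δ i)
    (B : Matrix (Fin N) (Fin N) ℝ) (hB : ∀ i j, 0 ≤ B i j)
    (hirr : MatrixIrreducible B)
    (heig : ∀ μ : ℂ,
      μ ∈ spectrum ℂ ((B - Matrix.diagonal δ).map (fun x => (x : ℂ))) → μ.re ≤ 0)
    (p : ℝ → Fin N → ℝ)
    (h0 : ∀ i, p 0 i ∈ Set.Icc (0 : ℝ) 1)
    (hode : ∀ i, ∀ t : ℝ, 0 ≤ t →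
      HasDerivAt (fun s => p s i)
        (-(δ i) * p t i + ∑ j, B i j * p t j * (1 - p t i)) t) :
    Filter.Tendsto p Filter.atTop (nhds 0) := by
  have : NeZero N := ⟨by omega⟩
  have hA : MatrixIrreducible (B - Matrix.diagonal δ) :=
    hirr.of_offDiag_eq fun i j hij => by simp [hij]
  obtain ⟨r, u, hu, hAu⟩ := hA.exists_pos_eigenvector fun i j hij => by simpa [hij] using hB i j
  have hr : r ≤ 0 := by
    simpa using heig r (Matrix.ofReal_mem_spectrum_map (fun h => (hu 0).ne' (congrFun h 0)) hAu)
  have hBu : ∀ i, (B *ᵥ u) i ≤ δ i * u i := fun i => by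
    have := congrFun hAu i
    simp only [sub_mulVec, Pi.sub_apply, mulVec_diagonal, Pi.smul_apply, smul_eq_mul] at this
    linarith [mul_nonpos_of_nonpos_of_nonneg hr (hu i).le]
  exact sis_tendsto_zero_of_supersolution hδ hB hu hBu hode
    fun t ht => sis_mem_Icc (fun i => (hδ i).le) hB hode h0 ht
end

section
/- Let N ≥ 1, let D = diag(δ₁,…,δ_N) with δᵢ > 0, and let B = (β_{ij}) be a nonnegative irreducible matrix. If B − D has a real eigenvalue λ > 0 (equivalently, λ_max(B − D) > 0), then there exists p** ∈ (0,1)^N with δᵢ pᵢ** = Σ_{j=1}^N β_{ij} p_j**(1 − pᵢ**) for all i, such that every differentiable p : [0,∞) → ℝ^N with p(0) ∈ [0,1]^N, p(0) ≠ 0, satisfying pᵢ'(t) = −δᵢ pᵢ(t) + Σ_{j=1}^N β_{ij} p_j(t)(1 − pᵢ(t)) for all i and all t ≥ 0, converges to p** as t → ∞. -/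
/-
Let `v` be a real eigenvector of `B - D` for `λ > 0` and `u = |v|`; then `(λ + δᵢ) uᵢ ≤ (B u)ᵢ`,
so for small `η > 0` the SIS vector field is nonnegative at `η u`. Equilibria are the fixed points
of the map `x ↦ (B x)ᵢ / (δᵢ + (B x)ᵢ)`, which is monotone on `[0,1]^N`; Tarski's theorem gives a
fixed point `e ≥ η u`, and irreducibility forces `0 < e < 1`.

Solutions starting in `[0,1]^N` stay there, and by irreducibility all coordinates are positive
at time `1`. The equilibrium identity `δᵢ eᵢ = (B e)ᵢ (1 - eᵢ)` shows that for
`M(t) = 1 + A e^{-γ t}` with `0 < γ < minᵢ (B e)ᵢ` the curves `M e` and `e / M` are strict upper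
and lower barriers for the flow; as `M → 1`, every such solution converges to `e`.
-/

open Filter Set Topology Matrix

theorem HasDerivAt.eventually_nhdsLT_lt {f : ℝ → ℝ} {f' x : ℝ} (hf : HasDerivAt f f' x)
    (hf' : 0 < f') : ∀ᶠ y in 𝓝[<] x, f y < f x := by
  filter_upwards [(hasDerivAt_iff_tendsto_slope_left_right.1 hf).1.eventually
    (eventually_gt_nhds hf'), self_mem_nhdsWithin] with y hslope hyx
  rw [slope_def_field] at hslope
  exact sub_neg.1 ((div_pos_iff.1 hslope).resolve_left fun h => h.2.not_gt (sub_neg.2 hyx)).1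

theorem forall_pos_of_deriv_pos_at_zero {κ : Type*} [Finite κ] {w w' : κ → ℝ → ℝ} {a b : ℝ}
    (hw : ∀ k, ∀ t ∈ Icc a b, HasDerivAt (w k) (w' k t) t) (ha : ∀ k, 0 < w k a)
    (hzero : ∀ t ∈ Icc a b, (∀ j, 0 ≤ w j t) → ∀ k, w k t = 0 → 0 < w' k t) :
    ∀ t ∈ Icc a b, ∀ k, 0 < w k t := by
  by_contra! ⟨t, ht, k, hk⟩
  set E := ⋃ k, Icc a b ∩ w k ⁻¹' Iic 0
  have hE : IsCompact E := by
    refine isCompact_Icc.of_isClosed_subset (isClosed_iUnion_of_finite fun k => ?_)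
      (iUnion_subset fun k => inter_subset_left)
    exact ContinuousOn.preimage_isClosed_of_isClosed
      (fun t ht => (hw k t ht).continuousAt.continuousWithinAt) isClosed_Icc isClosed_Iic
  obtain ⟨τ, hτE, hτmin⟩ := hE.exists_isLeast ⟨t, mem_iUnion.2 ⟨k, ht, hk⟩⟩
  obtain ⟨k, hτ, hkτ⟩ := mem_iUnion.1 hτE
  have hbefore : ∀ s ∈ Ico a τ, ∀ j, 0 < w j s := fun s hs j => not_le.1 fun hjs =>
    (hτmin (mem_iUnion.2 ⟨j, ⟨hs.1, hs.2.le.trans hτ.2⟩, hjs⟩)).not_gt hs.2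
  have haτ : a < τ := hτ.1.lt_of_ne fun h => (ha k).not_ge (h ▸ hkτ)
  have hτnonneg : ∀ j, 0 ≤ w j τ := fun j =>
    ge_of_tendsto ((hw j τ hτ).continuousAt.continuousWithinAt (s := Iio τ))
      (eventually_of_mem (Ioo_mem_nhdsLT haτ) fun s hs => (hbefore s ⟨hs.1.le, hs.2⟩ j).le)
  have hk0 : w k τ = 0 := le_antisymm hkτ (hτnonneg k)
  obtain ⟨s, hsτ, hs⟩ := (((hw k τ hτ).eventually_nhdsLT_lt
    (hzero τ hτ hτnonneg k hk0)).and (Ioo_mem_nhdsLT haτ)).exists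
  exact (hbefore s ⟨hs.1.le, hs.2⟩ k).not_ge (hk0 ▸ hsτ.le)

theorem mem_Ioo_of_strict_barriers {ι : Type*} [Finite ι] {x l u x' l' u' : ℝ → ι → ℝ}
    {a b : ℝ} (hx : ∀ i, ∀ t ∈ Icc a b, HasDerivAt (fun s => x s i) (x' t i) t)
    (hl : ∀ i, ∀ t ∈ Icc a b, HasDerivAt (fun s => l s i) (l' t i) t)
    (hu : ∀ i, ∀ t ∈ Icc a b, HasDerivAt (fun s => u s i) (u' t i) t)
    (ha : ∀ i, x a i ∈ Ioo (l a i) (u a i))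
    (hlow : ∀ t ∈ Icc a b, l t ≤ x t → x t ≤ u t → ∀ i, x t i = l t i → l' t i < x' t i)
    (hup : ∀ t ∈ Icc a b, l t ≤ x t → x t ≤ u t → ∀ i, x t i = u t i → x' t i < u' t i) :
    ∀ t ∈ Icc a b, ∀ i, x t i ∈ Ioo (l t i) (u t i) := by
  have key := forall_pos_of_deriv_pos_at_zero
    (w := Sum.elim (fun i s => x s i - l s i) (fun i s => u s i - x s i))
    (w' := Sum.elim (fun i t => x' t i - l' t i) (fun i t => u' t i - x' t i))
    (by rintro (i | i) t ht
        exacts [(hx i t ht).sub (hl i t ht), (hu i t ht).sub (hx i t ht)])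
    (by rintro (i | i); exacts [sub_pos.2 (ha i).1, sub_pos.2 (ha i).2])
    (by
      intro t ht hnonneg
      have hlx : l t ≤ x t := fun i => sub_nonneg.1 (hnonneg (.inl i))
      have hxu : x t ≤ u t := fun i => sub_nonneg.1 (hnonneg (.inr i))
      rintro (i | i) hi
      exacts [sub_pos.2 (hlow t ht hlx hxu i (sub_eq_zero.1 hi)),
        sub_pos.2 (hup t ht hlx hxu i (sub_eq_zero.1 hi).symm)])
  exact fun t ht i => ⟨sub_pos.1 (key t ht (.inl i)), sub_pos.1 (key t ht (.inr i))⟩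

section

variable {ι : Type*} [Fintype ι] {δ : ι → ℝ} {B : Matrix ι ι ℝ}

theorem Matrix.monotone_mulVec_of_nonneg (hB : ∀ i j, 0 ≤ B i j) : Monotone (B *ᵥ ·) :=
  fun _ _ hxy i => Finset.sum_le_sum fun j _ => mul_le_mul_of_nonneg_left (hxy j) (hB i j)

theorem Matrix.mulVec_nonneg (hB : ∀ i j, 0 ≤ B i j) {x : ι → ℝ} (hx : 0 ≤ x) :
    0 ≤ B *ᵥ x := by
  simpa using monotone_mulVec_of_nonneg hB hx

theorem Matrix.exists_abs_subinvariant_of_mem_spectrum [DecidableEq ι] (hB : ∀ i j, 0 ≤ B i j)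
    {lam : ℝ} (hlam : lam ∈ spectrum ℝ (B - diagonal δ)) :
    ∃ u : ι → ℝ, 0 ≤ u ∧ u ≠ 0 ∧ ∀ i, (lam + δ i) * u i ≤ (B *ᵥ u) i := by
  rw [← Matrix.spectrum_toLin', ← Module.End.hasEigenvalue_iff_mem_spectrum] at hlam
  obtain ⟨v, hv⟩ := hlam.exists_hasEigenvector
  have hBv : ∀ i, (B *ᵥ v) i = (lam + δ i) * v i := fun i => by
    have := congrFun hv.apply_eq_smul i
    simp only [toLin'_apply, sub_mulVec, mulVec_diagonal, Pi.sub_apply, Pi.smul_apply,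
      smul_eq_mul] at this
    linarith
  refine ⟨fun i => |v i|, fun i => abs_nonneg _, fun h => hv.2 (funext fun i => ?_),
    fun i => ?_⟩
  · simpa using congrFun h i
  calc (lam + δ i) * |v i| ≤ |lam + δ i| * |v i| :=
        mul_le_mul_of_nonneg_right (le_abs_self _) (abs_nonneg _)
    _ = |(B *ᵥ v) i| := by rw [hBv, abs_mul]
    _ ≤ ∑ j, |B i j * v j| := Finset.abs_sum_le_sum_abs _ _
    _ = (B *ᵥ fun j => |v j|) i := by simp [mulVec, dotProduct, abs_mul, abs_of_nonneg (hB i _)]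

def sisField (δ : ι → ℝ) (B : Matrix ι ι ℝ) (x : ι → ℝ) (i : ι) : ℝ :=
  -(δ i) * x i + ∑ j, B i j * x j * (1 - x i)

theorem sisField_eq (x : ι → ℝ) (i : ι) :
    sisField δ B x i = -(δ i) * x i + (B *ᵥ x) i * (1 - x i) := by
  simp [sisField, mulVec, dotProduct, Finset.sum_mul]

theorem lt_one_of_sisField_eq_zero (hδ : ∀ i, 0 < δ i) (hB : ∀ i j, 0 ≤ B i j) {e : ι → ℝ}
    (he : sisField δ B e = 0) (he0 : ∀ i, 0 < e i) (i : ι) : e i < 1 := by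
  have hei := congrFun he i
  rw [sisField_eq, Pi.zero_apply] at hei
  by_contra! h1
  nlinarith [mul_nonneg (mulVec_nonneg hB (fun j => (he0 j).le) i) (sub_nonneg.2 h1),
    mul_pos (hδ i) (he0 i)]

theorem sisField_le_of_le_smul (hB : ∀ i j, 0 ≤ B i j) {e x : ι → ℝ} {c : ℝ} {i : ι}
    (he : sisField δ B e i = 0) (hx : x ≤ c • e) (hxi : x i = c * e i) (hxi1 : x i ≤ 1) :
    sisField δ B x i ≤ c * (1 - c) * (B *ᵥ e) i * e i := by
  have hBx : (B *ᵥ x) i ≤ c * (B *ᵥ e) i := by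
    simpa [mulVec_smul] using monotone_mulVec_of_nonneg hB hx i
  rw [sisField_eq] at he ⊢
  rw [hxi] at hxi1 ⊢
  linarith [mul_le_mul_of_nonneg_right hBx (sub_nonneg.2 hxi1), congrArg (c * ·) he]

theorem le_sisField_of_smul_le (hB : ∀ i j, 0 ≤ B i j) {e x : ι → ℝ} {c : ℝ} {i : ι}
    (he : sisField δ B e i = 0) (hx : c • e ≤ x) (hxi : x i = c * e i) (hxi1 : x i ≤ 1) :
    c * (1 - c) * (B *ᵥ e) i * e i ≤ sisField δ B x i := by
  have hBx : c * (B *ᵥ e) i ≤ (B *ᵥ x) i := by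
    simpa [mulVec_smul] using monotone_mulVec_of_nonneg hB hx i
  rw [sisField_eq] at he ⊢
  rw [hxi] at hxi1 ⊢
  linarith [mul_le_mul_of_nonneg_right hBx (sub_nonneg.2 hxi1), congrArg (c * ·) he]

theorem sisField_smul_nonneg {u : ι → ℝ} {lam η : ℝ} (hu : 0 ≤ u)
    (hsub : ∀ i, (lam + δ i) * u i ≤ (B *ᵥ u) i) (hη : 0 ≤ η)
    (hηB : ∀ i, η * (B *ᵥ u) i ≤ lam) (i : ι) : 0 ≤ sisField δ B (η • u) i := by
  rw [sisField_eq, mulVec_smul]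
  simp only [Pi.smul_apply, smul_eq_mul]
  nlinarith [mul_nonneg hη (mul_nonneg (hu i) (sub_nonneg.2 (hηB i))),
    mul_le_mul_of_nonneg_left (hsub i) hη]

theorem neg_le_sisField_of_eq_neg {i : ι} (hδ : 0 ≤ δ i) (hB : ∀ i j, 0 ≤ B i j) {β E : ℝ}
    {x : ι → ℝ} (hβ : ∑ j, B i j ≤ β) (hE : E ∈ Icc (0 : ℝ) 1) (hx : ∀ j, -E ≤ x j)
    (hxi : x i = -E) : -(2 * β * E) ≤ sisField δ B x i := by
  have hBx : -E * ∑ j, B i j ≤ (B *ᵥ x) i := by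
    simpa [mulVec, dotProduct, Finset.mul_sum, mul_comm] using
      monotone_mulVec_of_nonneg hB (show (fun _ => -E) ≤ x from hx) i
  have hrow : 0 ≤ ∑ j, B i j := Finset.sum_nonneg fun j _ => hB i j
  rw [sisField_eq, hxi]
  nlinarith [mul_le_mul_of_nonneg_right hBx (by linarith [hE.1] : (0 : ℝ) ≤ 1 - -E),
    mul_le_mul_of_nonneg_left hβ hE.1, mul_le_mul_of_nonneg_left hE.2 (mul_nonneg hE.1 hrow),
    mul_nonneg hδ hE.1]

theorem sisField_le_of_eq_one_add {i : ι} (hδ : 0 ≤ δ i) (hB : ∀ i j, 0 ≤ B i j) {β E : ℝ}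
    {x : ι → ℝ} (hβ : ∑ j, B i j ≤ β) (hE : E ∈ Icc (0 : ℝ) 1) (hx : ∀ j, -E ≤ x j)
    (hxi : x i = 1 + E) : sisField δ B x i ≤ β * E := by
  have hBx : -E * ∑ j, B i j ≤ (B *ᵥ x) i := by
    simpa [mulVec, dotProduct, Finset.mul_sum, mul_comm] using
      monotone_mulVec_of_nonneg hB (show (fun _ => -E) ≤ x from hx) i
  have hrow : 0 ≤ ∑ j, B i j := Finset.sum_nonneg fun j _ => hB i j
  rw [sisField_eq, hxi]
  nlinarith [mul_le_mul_of_nonneg_left hBx hE.1, mul_le_mul_of_nonneg_left hβ hE.1,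
    mul_le_mul_of_nonneg_left hE.2 (mul_nonneg hE.1 hrow),
    mul_nonneg hδ (by linarith [hE.1] : (0 : ℝ) ≤ 1 + E)]

noncomputable def sisMap (δ : ι → ℝ) (B : Matrix ι ι ℝ) (x : ι → ℝ) (i : ι) : ℝ :=
  (B *ᵥ x) i / (δ i + (B *ᵥ x) i)

theorem sisMap_mem_Icc (hδ : ∀ i, 0 < δ i) (hB : ∀ i j, 0 ≤ B i j) {x : ι → ℝ} (hx : 0 ≤ x) :
    sisMap δ B x ∈ Icc 0 1 := by
  have hBx : ∀ i, 0 ≤ (B *ᵥ x) i := mulVec_nonneg hB hx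
  exact ⟨fun i => div_nonneg (hBx i) (by linarith [hδ i, hBx i]),
    fun i => div_le_one_of_le₀ (by linarith [hδ i]) (by linarith [hδ i, hBx i])⟩

theorem sisMap_mono (hδ : ∀ i, 0 < δ i) (hB : ∀ i j, 0 ≤ B i j) {x y : ι → ℝ} (hx : 0 ≤ x)
    (hxy : x ≤ y) : sisMap δ B x ≤ sisMap δ B y := by
  intro i
  have hBx : 0 ≤ (B *ᵥ x) i := mulVec_nonneg hB hx i
  have hBxy : (B *ᵥ x) i ≤ (B *ᵥ y) i := monotone_mulVec_of_nonneg hB hxy i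
  rw [sisMap, sisMap, div_le_div_iff₀ (by linarith [hδ i]) (by linarith [hδ i])]
  nlinarith [hδ i]

theorem sisField_eq_mul_sub_sisMap (hδ : ∀ i, 0 < δ i) (hB : ∀ i j, 0 ≤ B i j) {x : ι → ℝ}
    (hx : 0 ≤ x) (i : ι) :
    sisField δ B x i = (δ i + (B *ᵥ x) i) * (sisMap δ B x i - x i) := by
  have : δ i + (B *ᵥ x) i ≠ 0 := (add_pos_of_pos_of_nonneg (hδ i) (mulVec_nonneg hB hx i)).ne'
  rw [sisField_eq, sisMap]
  field_simp
  ring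

theorem exists_equilibrium_ge_of_sisField_nonneg (hδ : ∀ i, 0 < δ i) (hB : ∀ i j, 0 ≤ B i j)
    {x₀ : ι → ℝ} (hx₀ : x₀ ∈ Icc 0 1) (hsub : ∀ i, 0 ≤ sisField δ B x₀ i) :
    ∃ e ∈ Icc 0 1, x₀ ≤ e ∧ sisField δ B e = 0 := by
  have : Fact ((0 : ι → ℝ) ≤ 1) := ⟨zero_le_one⟩
  let G : Icc (0 : ι → ℝ) 1 →o Icc (0 : ι → ℝ) 1 :=
    { toFun := fun x => ⟨sisMap δ B x, sisMap_mem_Icc hδ hB x.2.1⟩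
      monotone' := fun x _ hxy => sisMap_mono hδ hB x.2.1 hxy }
  have hG : sisMap δ B G.gfp = G.gfp := congrArg Subtype.val G.map_gfp
  refine ⟨G.gfp, G.gfp.2, G.le_gfp (a := ⟨x₀, hx₀⟩) (show x₀ ≤ sisMap δ B x₀ from fun i => ?_),
    funext fun i => ?_⟩
  · have hpos := add_pos_of_pos_of_nonneg (hδ i) (mulVec_nonneg hB hx₀.1 i)
    have := sisField_eq_mul_sub_sisMap hδ hB hx₀.1 i ▸ hsub i
    exact sub_nonneg.1 ((mul_nonneg_iff_of_pos_left hpos).1 this)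
  · rw [sisField_eq_mul_sub_sisMap hδ hB G.gfp.2.1, hG, sub_self, mul_zero, Pi.zero_apply]

def IsSISSolution (δ : ι → ℝ) (B : Matrix ι ι ℝ) (p : ℝ → ι → ℝ) (t₀ : ℝ) : Prop :=
  ∀ i, ∀ t, t₀ ≤ t → HasDerivAt (fun s => p s i) (sisField δ B (p t) i) t

theorem IsSISSolution.mono {p : ℝ → ι → ℝ} {t₀ t₁ : ℝ} (hp : IsSISSolution δ B p t₀)
    (h : t₀ ≤ t₁) : IsSISSolution δ B p t₁ :=
  fun i t ht => hp i t (h.trans ht)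

theorem IsSISSolution.monotoneOn_mul_exp (hB : ∀ i j, 0 ≤ B i j) {p : ℝ → ι → ℝ} {t₀ : ℝ}
    (hp : IsSISSolution δ B p t₀) (hbox : ∀ t, t₀ ≤ t → ∀ i, p t i ∈ Icc (0 : ℝ) 1) (i : ι) :
    MonotoneOn (fun t => p t i * Real.exp (δ i * t)) (Ici t₀) := by
  have hderiv : ∀ t, t₀ ≤ t → HasDerivAt (fun t => p t i * Real.exp (δ i * t))
      (Real.exp (δ i * t) * ((B *ᵥ p t) i * (1 - p t i))) t := fun t ht => by
    refine ((hp i t ht).mul ((hasDerivAt_id t).const_mul (δ i)).exp).congr_deriv ?_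
    rw [sisField_eq]
    simp only [id]
    ring
  refine monotoneOn_of_hasDerivWithinAt_nonneg (convex_Ici t₀)
    (fun t ht => (hderiv t ht).continuousAt.continuousWithinAt)
    (fun t ht => (hderiv t (interior_subset ht)).hasDerivWithinAt) fun t ht => ?_
  have ht : t₀ ≤ t := interior_subset ht
  exact mul_nonneg (Real.exp_pos _).le (mul_nonneg (mulVec_nonneg hB (fun j => (hbox t ht j).1) i)
    (sub_nonneg.2 (hbox t ht i).2))

theorem IsSISSolution.mem_Icc (hδ : ∀ i, 0 ≤ δ i) (hB : ∀ i j, 0 ≤ B i j) {p : ℝ → ι → ℝ}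
    (hp : IsSISSolution δ B p 0) (hp0 : ∀ i, p 0 i ∈ Icc (0 : ℝ) 1) :
    ∀ t, 0 ≤ t → ∀ i, p t i ∈ Icc (0 : ℝ) 1 := by
  intro T hT i
  set β := ∑ i, ∑ j, B i j
  have hβ : ∀ i, ∑ j, B i j ≤ β := fun i =>
    Finset.single_le_sum (fun i _ => Finset.sum_nonneg fun j _ => hB i j) (Finset.mem_univ i)
  have hβ0 : 0 ≤ β := (Finset.sum_nonneg fun j _ => hB i j).trans (hβ i)
  set C := 2 * β + 1
  -- Near the faces of the box the field pushes outwards at rate at most `2 β E` (when `E ≤ 1`),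
  -- which the enlargement `E = ε e^{C (s - T)}` of the box outgrows.
  have key : ∀ ε ∈ Ioc (0 : ℝ) 1, p T i ∈ Ioo (-ε) (1 + ε) := by
    intro ε hε
    let E : ℝ → ℝ := fun s => ε * Real.exp (C * (s - T))
    have hE : ∀ s, HasDerivAt E (C * E s) s := fun s =>
      ((((hasDerivAt_id s).sub_const T).const_mul C).exp.const_mul ε).congr_deriv
        (by simp only [E, id]; ring)
    have hEmem : ∀ s ∈ Icc 0 T, E s ∈ Icc 0 1 ∧ 0 < E s := fun s hs =>
      have hEpos : 0 < E s := mul_pos hε.1 (Real.exp_pos _)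
      ⟨⟨hEpos.le, mul_le_one₀ hε.2 (Real.exp_pos _).le (Real.exp_le_one_iff.2
        (mul_nonpos_of_nonneg_of_nonpos (by linarith) (sub_nonpos.2 hs.2)))⟩, hEpos⟩
    have hbar := mem_Ioo_of_strict_barriers (a := 0) (b := T) (x := p)
      (l := fun s _ => -E s) (u := fun s _ => 1 + E s) (x' := fun t i => sisField δ B (p t) i)
      (l' := fun t _ => -(C * E t)) (u' := fun t _ => C * E t)
      (fun i t ht => hp i t ht.1) (fun _ t _ => (hE t).neg) (fun _ t _ => (hE t).const_add 1)
      (fun i => ⟨by simp only [E]; linarith [(hp0 i).1, (hEmem 0 ⟨le_rfl, hT⟩).2],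
        by simp only [E]; linarith [(hp0 i).2, (hEmem 0 ⟨le_rfl, hT⟩).2]⟩)
      (fun t ht hl _ i hi => by
        have := neg_le_sisField_of_eq_neg (hδ i) hB (hβ i) (hEmem t ht).1 hl hi
        nlinarith [(hEmem t ht).2])
      (fun t ht hl _ i hi => by
        have := sisField_le_of_eq_one_add (hδ i) hB (hβ i) (hEmem t ht).1 hl hi
        nlinarith [(hEmem t ht).2])
      T ⟨hT, le_rfl⟩ i
    simpa [E] using hbar
  refine ⟨le_of_forall_pos_lt_add fun ε hε => ?_, le_of_forall_pos_lt_add fun ε hε => ?_⟩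
  · linarith [(key (min ε 1) ⟨lt_min hε one_pos, min_le_right _ _⟩).1, min_le_left ε 1]
  · linarith [(key (min ε 1) ⟨lt_min hε one_pos, min_le_right _ _⟩).2, min_le_left ε 1]

theorem IsSISSolution.mem_Ioo_of_envelope (hB : ∀ i j, 0 ≤ B i j) {e : ι → ℝ}
    (he : sisField δ B e = 0) (he0 : ∀ i, 0 < e i) {p : ℝ → ι → ℝ} {t₀ : ℝ}
    (hp : IsSISSolution δ B p t₀) (hp1 : ∀ t, t₀ ≤ t → ∀ i, p t i ≤ 1) {M : ℝ → ℝ} {γ : ℝ}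
    (hM : ∀ t, 1 < M t) (hM' : ∀ t, HasDerivAt M (-γ * (M t - 1)) t)
    (hγ : ∀ i, γ < (B *ᵥ e) i) (h₀ : ∀ i, p t₀ i ∈ Ioo ((M t₀)⁻¹ * e i) (M t₀ * e i)) :
    ∀ t, t₀ ≤ t → ∀ i, p t i ∈ Ioo ((M t)⁻¹ * e i) (M t * e i) := by
  intro t ht
  refine mem_Ioo_of_strict_barriers (a := t₀) (b := t) (x := p) (l := fun s i => (M s)⁻¹ * e i)
    (u := fun s i => M s * e i) (x' := fun s i => sisField δ B (p s) i)
    (l' := fun s i => -(-γ * (M s - 1)) / M s ^ 2 * e i) (u' := fun s i => -γ * (M s - 1) * e i)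
    (fun i s hs => hp i s hs.1) (fun i s _ => ((hM' s).inv (by linarith [hM s])).mul_const (e i))
    (fun i s _ => (hM' s).mul_const (e i)) h₀ (fun s hs hl _ i hi => ?_)
    (fun s hs _ hu i hi => ?_) t ⟨ht, le_rfl⟩
  · have hM1 : 0 < M s - 1 := sub_pos.2 (hM s)
    have hM0 : M s ≠ 0 := by linarith [hM s]
    calc -(-γ * (M s - 1)) / M s ^ 2 * e i = γ * ((M s - 1) / M s ^ 2 * e i) := by ring
      _ < (B *ᵥ e) i * ((M s - 1) / M s ^ 2 * e i) :=
        mul_lt_mul_of_pos_right (hγ i) (mul_pos (div_pos hM1 (by positivity)) (he0 i))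
      _ = (M s)⁻¹ * (1 - (M s)⁻¹) * (B *ᵥ e) i * e i := by field_simp
      _ ≤ sisField δ B (p s) i := le_sisField_of_smul_le hB (congrFun he i) hl hi (hp1 s hs.1 i)
  · have hγM : γ < M s * (B *ᵥ e) i := (hγ i).trans_le (le_mul_of_one_le_left
      (mulVec_nonneg hB (fun j => (he0 j).le) i) (hM s).le)
    calc sisField δ B (p s) i ≤ M s * (1 - M s) * (B *ᵥ e) i * e i :=
          sisField_le_of_le_smul hB (congrFun he i) hu hi (hp1 s hs.1 i)
      _ < -γ * (M s - 1) * e i := by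
        nlinarith [mul_pos (mul_pos (sub_pos.2 (hM s)) (he0 i)) (sub_pos.2 hγM)]

theorem IsSISSolution.tendsto_of_pos (hδ : ∀ i, 0 < δ i) (hB : ∀ i j, 0 ≤ B i j) {e : ι → ℝ}
    (he : sisField δ B e = 0) (he01 : ∀ i, e i ∈ Ioo (0 : ℝ) 1) {p : ℝ → ι → ℝ} {t₀ : ℝ}
    (hp : IsSISSolution δ B p t₀) (hp1 : ∀ t, t₀ ≤ t → ∀ i, p t i ≤ 1) (hpos : ∀ i, 0 < p t₀ i) :
    Tendsto p atTop (𝓝 e) := by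
  have hS : ∀ i, 0 < (B *ᵥ e) i := fun i => by
    have hei := congrFun he i
    rw [sisField_eq, Pi.zero_apply] at hei
    by_contra! h
    nlinarith [mul_pos (hδ i) (he01 i).1, mul_nonneg_of_nonpos_of_nonpos h
      (sub_nonpos.2 (he01 i).2.le)]
  obtain ⟨γ, hγS, hγ⟩ : ∃ γ : ℝ, (∀ i, γ < (B *ᵥ e) i) ∧ 0 < γ :=
    ((eventually_all.2 fun i => eventually_lt_nhds (hS i)).filter_mono nhdsWithin_le_nhds |>.and
      self_mem_nhdsWithin).exists (f := 𝓝[>] (0 : ℝ))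
  obtain ⟨A, hA, hA0⟩ : ∃ A : ℝ, (∀ i, 1 ≤ A * e i ∧ 1 ≤ A * p t₀ i) ∧ 0 < A :=
    ((eventually_all.2 fun i =>
      ((tendsto_id.atTop_mul_const (he01 i).1).eventually_ge_atTop 1).and
      ((tendsto_id.atTop_mul_const (hpos i)).eventually_ge_atTop 1)).and
      (eventually_gt_atTop 0)).exists
  set M : ℝ → ℝ := fun t => 1 + A * Real.exp (-γ * (t - t₀))
  have hM : ∀ t, 1 < M t := fun t => lt_add_of_pos_right 1 (mul_pos hA0 (Real.exp_pos _))
  have hM' : ∀ t, HasDerivAt M (-γ * (M t - 1)) t := fun t =>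
    (((((hasDerivAt_id t).sub_const t₀).const_mul (-γ)).exp.const_mul A).const_add 1).congr_deriv
      (by simp only [M, id]; ring)
  have hMlim : Tendsto M atTop (𝓝 1) := by
    have hlin : Tendsto (fun t => -γ * (t - t₀)) atTop atBot :=
      (tendsto_atTop_add_const_right _ (-t₀) tendsto_id).const_mul_atTop_of_neg (neg_neg_of_pos hγ)
    simpa [M] using ((Real.tendsto_exp_atBot.comp hlin).const_mul A).const_add 1
  have h₀ : ∀ i, p t₀ i ∈ Ioo ((M t₀)⁻¹ * e i) (M t₀ * e i) := fun i => by
    simp only [M, sub_self, mul_zero, Real.exp_zero, mul_one]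
    rw [mem_Ioo, inv_mul_lt_iff₀ (by linarith)]
    constructor <;> linarith [hA i, (he01 i).1, (he01 i).2, hpos i, hp1 t₀ le_rfl i]
  have hsand := hp.mem_Ioo_of_envelope hB he (fun i => (he01 i).1) hp1 hM hM' hγS h₀
  refine tendsto_pi_nhds.2 fun i => tendsto_of_tendsto_of_tendsto_of_le_of_le' ?_ ?_
    (eventually_atTop.2 ⟨t₀, fun t ht => (hsand t ht i).1.le⟩)
    (eventually_atTop.2 ⟨t₀, fun t ht => (hsand t ht i).2.le⟩)
  · simpa using (hMlim.inv₀ one_ne_zero).mul_const (e i)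
  · simpa using hMlim.mul_const (e i)

end

theorem MatrixIrreducible.pos_of_mulVec_eq_zero {N : ℕ} {B : Matrix (Fin N) (Fin N) ℝ}
    (hirr : MatrixIrreducible B) (hB : ∀ i j, 0 ≤ B i j) {x : Fin N → ℝ} (hx : 0 ≤ x)
    (hx0 : x ≠ 0) (hzero : ∀ i, x i = 0 → (B *ᵥ x) i = 0) : ∀ i, 0 < x i := by
  by_contra! ⟨i₀, hi₀⟩
  classical
  set Z := Finset.univ.filter (x · = 0)
  obtain ⟨i, hiZ, j, hjZ, hBij⟩ := hirr Z ⟨i₀, by simp [Z, le_antisymm hi₀ (hx i₀)]⟩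
    fun hZ => hx0 (funext fun i => by simpa [Z] using (hZ.symm ▸ Finset.mem_univ i : i ∈ Z))
  simp only [Z, Finset.mem_filter, Finset.mem_univ, true_and] at hiZ hjZ
  have hBx := (Finset.sum_eq_zero_iff_of_nonneg fun k _ => mul_nonneg (hB i k) (hx k)).1
    (by simpa [mulVec, dotProduct] using hzero i hiZ) j (Finset.mem_univ j)
  exact hjZ ((mul_eq_zero.1 hBx).resolve_left hBij)

theorem exists_endemic_equilibrium {N : ℕ} {δ : Fin N → ℝ} {B : Matrix (Fin N) (Fin N) ℝ}
    (hδ : ∀ i, 0 < δ i) (hB : ∀ i j, 0 ≤ B i j) (hirr : MatrixIrreducible B) {lam : ℝ}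
    (hlam : 0 < lam) (hspec : lam ∈ spectrum ℝ (B - diagonal δ)) :
    ∃ e : Fin N → ℝ, (∀ i, e i ∈ Ioo 0 1) ∧ sisField δ B e = 0 := by
  obtain ⟨u, hu, hu0, hsub⟩ := exists_abs_subinvariant_of_mem_spectrum hB hspec
  obtain ⟨η, hηB, hη⟩ : ∃ η : ℝ, (∀ i, η * (B *ᵥ u) i ≤ lam ∧ η * u i ≤ 1) ∧ 0 < η := by
    refine ((eventually_all.2 fun i => ?_).filter_mono nhdsWithin_le_nhds |>.and
      self_mem_nhdsWithin).exists (f := 𝓝[>] (0 : ℝ))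
    have hsmall : ∀ c : ℝ, Tendsto (· * c) (𝓝 0) (𝓝 0) := fun c =>
      (continuous_mul_const c).tendsto' 0 0 (zero_mul c)
    exact ((hsmall _).eventually (eventually_le_nhds hlam)).and
      ((hsmall _).eventually (eventually_le_nhds one_pos))
  obtain ⟨e, he01, hue, he⟩ := exists_equilibrium_ge_of_sisField_nonneg hδ hB
    ⟨smul_nonneg hη.le hu, fun i => (hηB i).2⟩
    (sisField_smul_nonneg hu hsub hη.le fun i => (hηB i).1)
  have he0 : e ≠ 0 := fun h => smul_ne_zero hη.ne' hu0
    (le_antisymm (h ▸ hue) (smul_nonneg hη.le hu))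
  have hpos := hirr.pos_of_mulVec_eq_zero hB he01.1 he0 fun i hi => by
    simpa [sisField_eq, hi] using congrFun he i
  exact ⟨e, fun i => ⟨hpos i, lt_one_of_sisField_eq_zero hδ hB he hpos i⟩, he⟩

theorem IsSISSolution.pos_of_irreducible {N : ℕ} {δ : Fin N → ℝ} {B : Matrix (Fin N) (Fin N) ℝ}
    (hB : ∀ i j, 0 ≤ B i j) (hirr : MatrixIrreducible B) {p : ℝ → Fin N → ℝ}
    (hp : IsSISSolution δ B p 0) (hbox : ∀ t, 0 ≤ t → ∀ i, p t i ∈ Icc (0 : ℝ) 1)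
    (hp0 : p 0 ≠ 0) : ∀ i, 0 < p 1 i := by
  have hmono := hp.monotoneOn_mul_exp hB hbox
  have hle : ∀ i, ∀ s ∈ Icc (0 : ℝ) 1, p s i * Real.exp (δ i * s) ≤ p 1 i * Real.exp (δ i * 1) :=
    fun i s hs => hmono i hs.1 (mem_Ici.2 zero_le_one) hs.2
  refine hirr.pos_of_mulVec_eq_zero hB (fun i => (hbox 1 zero_le_one i).1) ?_ fun i hi => ?_
  · obtain ⟨i, hi⟩ := Function.ne_iff.1 hp0
    have hpos : 0 < p 0 i * Real.exp (δ i * 0) :=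
      mul_pos ((hbox 0 le_rfl i).1.lt_of_ne' hi) (Real.exp_pos _)
    exact Function.ne_iff.2 ⟨i, (pos_of_mul_pos_left (hpos.trans_le (hle i 0 ⟨le_rfl, zero_le_one⟩))
      (Real.exp_pos _).le).ne'⟩
  have hzero : ∀ s ∈ Icc (0 : ℝ) 1, p s i = 0 := fun s hs => le_antisymm
    (nonpos_of_mul_nonpos_left (by simpa [hi] using hle i s hs) (Real.exp_pos _))
    (hbox s hs.1 i).1
  have hderiv : sisField δ B (p 1) i = 0 :=
    (uniqueDiffOn_Icc_zero_one 1 ⟨zero_le_one, le_rfl⟩).eq_deriv _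
      (((hp i 1 zero_le_one).hasDerivWithinAt).congr (f₁ := fun _ => 0)
        (fun s hs => (hzero s hs).symm) hi.symm)
      (hasDerivWithinAt_const 1 _ 0)
  simpa [sisField_eq, hi] using hderiv

theorem stmt_9_general (N : ℕ)
    (δ : Fin N → ℝ) (hδ : ∀ i, 0 < δ i)
    (B : Matrix (Fin N) (Fin N) ℝ) (hB : ∀ i j, 0 ≤ B i j)
    (hirr : MatrixIrreducible B)
    (heig : ∃ lam : ℝ, 0 < lam ∧ lam ∈ spectrum ℝ (B - Matrix.diagonal δ)) :
    ∃ pss : Fin N → ℝ,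
      (∀ i, pss i ∈ Set.Ioo (0 : ℝ) 1) ∧
      (∀ i, δ i * pss i = ∑ j, B i j * pss j * (1 - pss i)) ∧
      ∀ p : ℝ → Fin N → ℝ,
        (∀ i, p 0 i ∈ Set.Icc (0 : ℝ) 1) →
        p 0 ≠ 0 →
        (∀ i, ∀ t : ℝ, 0 ≤ t →
          HasDerivAt (fun s => p s i)
            (-(δ i) * p t i + ∑ j, B i j * p t j * (1 - p t i)) t) →
        Filter.Tendsto p Filter.atTop (nhds pss) := by
  obtain ⟨lam, hlam, hspec⟩ := heig
  obtain ⟨e, he01, he⟩ := exists_endemic_equilibrium hδ hB hirr hlam hspec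
  refine ⟨e, he01, fun i => ?_, fun p hp0 hne hp => ?_⟩
  · have hei := congrFun he i
    rw [sisField, Pi.zero_apply] at hei
    linarith
  have hbox := IsSISSolution.mem_Icc (fun i => (hδ i).le) hB hp hp0
  exact (IsSISSolution.mono hp zero_le_one).tendsto_of_pos hδ hB he he01
    (fun t ht i => (hbox t (zero_le_one.trans ht) i).2)
    (IsSISSolution.pos_of_irreducible hB hirr hp hbox hne)

/-- Heterogeneous SIS network model above the threshold: if `B − D` has a
real eigenvalue `λ > 0`, then there is an endemic equilibrium `p** ∈ (0,1)^N` with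
`δᵢ pᵢ** = Σⱼ β_{ij} pⱼ** (1 − pᵢ**)` to which every solution of
`pᵢ' = −δᵢ pᵢ + Σⱼ β_{ij} pⱼ (1 − pᵢ)` with `p 0 ∈ [0,1]^N`, `p 0 ≠ 0`, converges. -/
theorem stmt_9 (N : ℕ) (hN : 1 ≤ N)
    (δ : Fin N → ℝ) (hδ : ∀ i, 0 < δ i)
    (B : Matrix (Fin N) (Fin N) ℝ) (hB : ∀ i j, 0 ≤ B i j)
    (hirr : MatrixIrreducible B)
    (heig : ∃ lam : ℝ, 0 < lam ∧ lam ∈ spectrum ℝ (B - Matrix.diagonal δ)) :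
    ∃ pss : Fin N → ℝ,
      (∀ i, pss i ∈ Set.Ioo (0 : ℝ) 1) ∧
      (∀ i, δ i * pss i = ∑ j, B i j * pss j * (1 - pss i)) ∧
      ∀ p : ℝ → Fin N → ℝ,
        (∀ i, p 0 i ∈ Set.Icc (0 : ℝ) 1) →
        p 0 ≠ 0 →
        (∀ i, ∀ t : ℝ, 0 ≤ t →
          HasDerivAt (fun s => p s i)
            (-(δ i) * p t i + ∑ j, B i j * p t j * (1 - p t i)) t) →
        Filter.Tendsto p Filter.atTop (nhds pss) :=
  stmt_9_general N δ hδ B hB hirr heig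
end
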